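/- For every τ ∈ [0,1] and every pulse ŵ for F^τ, one has ŵᵢ(x) ≤ w⁻ᵢ for every i ∈ {1,…,8} and every x ≥ 0. -/

import Mathlib

open Filter Topology Matrix
open scoped ENNReal

noncomputable section

/-- The positive parameters of the blood coagulation system.
Indices `0..7` of `k`, `h`, `D` correspond to `k₁..k₈`, `h₁..h₈`, `D₁..D₈`;
indices `2..7` of `ρ` correspond to `ρ₃..ρ₈` (so `T⁰ = ρ₈ = ρ 7`). -/
structure Params where
  k : Fin 8 → ℝ
  kb6 : ℝ
  kb8 : ℝ
  h : Fin 8 → ℝ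
  ρ : Fin 8 → ℝ
  D : Fin 8 → ℝ

/-- All parameters are positive (`ρ i` only for the meaningful indices `i ≥ 2`). -/
def Params.Pos (p : Params) : Prop :=
  (∀ i, 0 < p.k i) ∧ 0 < p.kb6 ∧ 0 < p.kb8 ∧ (∀ i, 0 < p.h i) ∧
    (∀ i : Fin 8, 2 ≤ (i : ℕ) → 0 < p.ρ i) ∧ (∀ i, 0 < p.D i)

/-- The reaction terms `F = (F₁,…,F₈)` (component `i-1` is `Fᵢ`, `v (i-1)` is `vᵢ`). -/
def Fvec (p : Params) (v : Fin 8 → ℝ) : Fin 8 → ℝ :=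
  ![p.k 0 * v 2 * v 5 - p.h 0 * v 0,
    p.k 1 * v 3 * v 4 - p.h 1 * v 1,
    p.k 2 * v 7 * (p.ρ 2 - v 2) - p.h 2 * v 2,
    p.k 3 * v 7 * (p.ρ 3 - v 3) - p.h 3 * v 3,
    p.k 4 * v 6 * (p.ρ 4 - v 4) - p.h 4 * v 4,
    (p.k 5 * v 4 + p.kb6 * v 1) * (p.ρ 5 - v 5) - p.h 5 * v 5,
    p.k 6 * v 7 * (p.ρ 6 - v 6) - p.h 6 * v 6,
    (p.k 7 * v 5 + p.kb8 * v 0) * (p.ρ 7 - v 7) - p.h 7 * v 7]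

def phi3 (p : Params) (T : ℝ) : ℝ := p.k 2 * p.ρ 2 * T / (p.k 2 * T + p.h 2)

def phi4 (p : Params) (T : ℝ) : ℝ := p.k 3 * p.ρ 3 * T / (p.k 3 * T + p.h 3)

def phi7 (p : Params) (T : ℝ) : ℝ := p.k 6 * p.ρ 6 * T / (p.k 6 * T + p.h 6)

def phi5 (p : Params) (T : ℝ) : ℝ :=
  p.k 4 * p.ρ 4 * phi7 p T / (p.k 4 * phi7 p T + p.h 4)

def phi2 (p : Params) (T : ℝ) : ℝ := p.k 1 / p.h 1 * (phi4 p T * phi5 p T)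

def phi6 (p : Params) (T : ℝ) : ℝ :=
  p.ρ 5 * (p.k 5 * phi5 p T + p.kb6 * phi2 p T) /
    (p.k 5 * phi5 p T + p.kb6 * phi2 p T + p.h 5)

def phi1 (p : Params) (T : ℝ) : ℝ := p.k 0 / p.h 0 * (phi3 p T * phi6 p T)

/-- `P(T) = (k₈φ₆(T) + k̄₈φ₁(T))(T⁰ − T) − h₈T`. -/
def Ppoly (p : Params) (T : ℝ) : ℝ :=
  (p.k 7 * phi6 p T + p.kb8 * phi1 p T) * (p.ρ 7 - T) - p.h 7 * T

/-- The vector `(φ₁(T),…,φ₇(T),T)`; `phivec p T̄ = w̄`, `phivec p T⁻ = w⁻`. -/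
def phivec (p : Params) (T : ℝ) : Fin 8 → ℝ :=
  ![phi1 p T, phi2 p T, phi3 p T, phi4 p T, phi5 p T, phi6 p T, phi7 p T, T]

/-- Condition (P): `P` has exactly the three nonnegative zeros `0 < T̄ < T⁻`, with
`P′(0) < 0`, `P′(T̄) > 0`, `P′(T⁻) < 0`. -/
def CondP (p : Params) (Tb Tm : ℝ) : Prop :=
  0 < Tb ∧ Tb < Tm ∧
    (∀ T : ℝ, 0 ≤ T → (Ppoly p T = 0 ↔ T = 0 ∨ T = Tb ∨ T = Tm)) ∧
    deriv (Ppoly p) 0 < 0 ∧ 0 < deriv (Ppoly p) Tb ∧ deriv (Ppoly p) Tm < 0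

/-- `g` is smooth, nonnegative on `[0,∞)`, with support inside `(T̄, T⁻)`. -/
def GoodG (Tb Tm : ℝ) (g : ℝ → ℝ) : Prop :=
  ContDiff ℝ (⊤ : ℕ∞) g ∧ (∀ s : ℝ, 0 ≤ s → 0 ≤ g s) ∧ tsupport g ⊆ Set.Ioo Tb Tm

/-- The homotopy `F^τ`: components `1..7` are those of `F` and
`F^τ₈(v) = α^τ F₈(v) + β^τ P(v₈) + γ^τ g(v₈)`. -/
def Ftau (p : Params) (τ₁ : ℝ) (g : ℝ → ℝ) (τ : ℝ) (v : Fin 8 → ℝ) : Fin 8 → ℝ :=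
  fun i =>
    if i = 7 then
      (if τ < τ₁ then 1 else (1 - τ) / (1 - τ₁)) * Fvec p v 7 +
        (if τ < τ₁ then 0 else (τ - τ₁) / (1 - τ₁)) * Ppoly p (v 7) +
        (if τ < τ₁ then τ else τ₁) * g (v 7)
    else Fvec p v i

/-- The set `𝒞 = {v ∈ ℝ⁸ : vᵢ ≥ 0 for all i, vᵢ ≤ ρᵢ for i = 3,…,8}`. -/
def CSet (p : Params) : Set (Fin 8 → ℝ) :=
  {v | (∀ i, 0 ≤ v i) ∧ ∀ i : Fin 8, 2 ≤ (i : ℕ) → v i ≤ p.ρ i}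

/-- The partial derivative `∂FFᵢ/∂vⱼ` at `v`. -/
def pd (FF : (Fin 8 → ℝ) → Fin 8 → ℝ) (i j : Fin 8) (v : Fin 8 → ℝ) : ℝ :=
  deriv (fun t => FF (Function.update v j t) i) (v j)

/-- The Jacobian matrix of `FF` at `v`. -/
def Jac (FF : (Fin 8 → ℝ) → Fin 8 → ℝ) (v : Fin 8 → ℝ) : Matrix (Fin 8) (Fin 8) ℝ :=
  fun i j => pd FF i j v

/-- `lam ∈ ℂ` is an eigenvalue of the real matrix `J`. -/
def IsEig (J : Matrix (Fin 8) (Fin 8) ℝ) (lam : ℂ) : Prop :=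
  ∃ x : Fin 8 → ℂ, x ≠ 0 ∧ (J.map Complex.ofReal) *ᵥ x = lam • x

/-- A pulse for the reaction term `FF`: a `C²` decreasing positive solution of
`D w″ + FF(w) = 0` on `[0,∞)` with `w′(0) = 0` and `w(+∞) = 0`. -/
def IsPulse (p : Params) (FF : (Fin 8 → ℝ) → Fin 8 → ℝ) (w : ℝ → Fin 8 → ℝ) : Prop :=
  (∀ i, ContDiff ℝ 2 fun x => w x i) ∧
    (∀ i : Fin 8, ∀ x : ℝ, 0 ≤ x →
      p.D i * deriv (deriv (fun y => w y i)) x + FF (w x) i = 0) ∧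
    (∀ i, deriv (fun y => w y i) 0 = 0) ∧
    (∀ i, Tendsto (fun x => w x i) atTop (𝓝 0)) ∧
    (∀ i : Fin 8, ∀ x : ℝ, 0 < x → deriv (fun y => w y i) x < 0)

/-- A travelling wave for `FF` with speed `c`, connecting `wm` (at `−∞`) to `0` (at `+∞`). -/
def IsWave (p : Params) (FF : (Fin 8 → ℝ) → Fin 8 → ℝ) (wm : Fin 8 → ℝ) (c : ℝ)
    (u : ℝ → Fin 8 → ℝ) : Prop :=
  (∀ i, ContDiff ℝ 2 fun x => u x i) ∧
    (∀ i : Fin 8, ∀ x : ℝ,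
      p.D i * deriv (deriv (fun y => u y i)) x + c * deriv (fun y => u y i) x +
        FF (u x) i = 0) ∧
    (∀ i, Tendsto (fun x => u x i) atBot (𝓝 (wm i))) ∧
    (∀ i, Tendsto (fun x => u x i) atTop (𝓝 0))

/-- The weighted function `x ↦ μ(x)·z(x)` with `μ(x) = √(1+x²)`. -/
def wtd (z : ℝ → Fin 8 → ℝ) : ℝ → Fin 8 → ℝ := fun x => Real.sqrt (1 + x ^ 2) • z x

/-- The weighted Hölder norm `‖z‖_{E¹_μ}`, valued in `ℝ≥0∞`
(the norm on `ℝ⁸ = Fin 8 → ℝ` is the maximum norm). -/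
def E1norm (α : ℝ) (z : ℝ → Fin 8 → ℝ) : ℝ≥0∞ :=
  (⨆ x ∈ Set.Ici (0 : ℝ), ENNReal.ofReal
      (‖wtd z x‖ + ‖deriv (wtd z) x‖ + ‖deriv (deriv (wtd z)) x‖)) +
    ⨆ x ∈ Set.Ici (0 : ℝ), ⨆ y ∈ Set.Ici (0 : ℝ), ⨆ _ : x ≠ y,
      ENNReal.ofReal (‖deriv (deriv (wtd z)) x - deriv (deriv (wtd z)) y‖ / |x - y| ^ α)

/-- A solution of the scalar pulse problem `D₈T″ + P(T) + τ₁g(T) = 0` on `[0,∞)`,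
`T′(0) = 0`, `T(+∞) = 0`, `T′ < 0` on `(0,∞)`. -/
def ScalarPulse (p : Params) (τ₁ : ℝ) (g : ℝ → ℝ) (T : ℝ → ℝ) : Prop :=
  ContDiff ℝ 2 T ∧
    (∀ x : ℝ, 0 ≤ x → p.D 7 * deriv (deriv T) x + Ppoly p (T x) + τ₁ * g (T x) = 0) ∧
    deriv T 0 = 0 ∧ Tendsto T atTop (𝓝 0) ∧ ∀ x : ℝ, 0 < x → deriv T x < 0

/-! ### Auxiliary lemmas -/

theorem secondDeriv_nonpos (f : ℝ → ℝ) (hf : ContDiff ℝ 2 f) (h0 : deriv f 0 = 0)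
    (hneg : ∀ x : ℝ, 0 < x → deriv f x < 0) : deriv (deriv f) 0 ≤ 0 := by
  have hd : Differentiable ℝ (deriv f) := (hf.iterate_deriv' 1 1).differentiable (by simp)
  have hD : HasDerivWithinAt (deriv f) (deriv (deriv f) 0) (Set.Ioi 0) 0 :=
    (hd 0).hasDerivAt.hasDerivWithinAt
  rw [hasDerivWithinAt_iff_tendsto_slope] at hD
  have hset : Set.Ioi (0:ℝ) \ {0} = Set.Ioi 0 := by
    ext y; simp (config := {contextual := true}) [ne_of_gt]
  rw [hset] at hD
  refine le_of_tendsto hD ?_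
  filter_upwards [self_mem_nhdsWithin] with y hy
  have hs : slope (deriv f) 0 y = deriv f y / y := by
    simp [slope, h0, div_eq_inv_mul]
  rw [hs]
  exact le_of_lt (div_neg_of_neg_of_pos (hneg y hy) hy)

theorem myAnti (f : ℝ → ℝ) (hf : ContDiff ℝ 2 f)
    (hneg : ∀ x : ℝ, 0 < x → deriv f x < 0) :
    AntitoneOn f (Set.Ici 0) := by
  apply antitoneOn_of_deriv_nonpos (convex_Ici 0)
    (hf.continuous.continuousOn)
    (fun x hx => (hf.differentiable (by norm_num) x).differentiableWithinAt)
  intro x hx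
  rw [interior_Ici] at hx
  exact le_of_lt (hneg x hx)

theorem monoFrac {a ρ h s t : ℝ} (ha : 0 < a) (hρ : 0 ≤ ρ) (hh : 0 < h)
    (hs : 0 ≤ s) (hst : s ≤ t) : a * ρ * s / (a * s + h) ≤ a * ρ * t / (a * t + h) := by
  rw [div_le_div_iff₀ (by nlinarith) (by nlinarith)]
  nlinarith [mul_le_mul_of_nonneg_left hst (mul_nonneg (mul_nonneg ha.le hρ) hh.le)]

theorem monoFrac2 {ρ h s t : ℝ} (hρ : 0 ≤ ρ) (hh : 0 < h)
    (hs : 0 ≤ s) (hst : s ≤ t) : ρ * s / (s + h) ≤ ρ * t / (t + h) := by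
  rw [div_le_div_iff₀ (by nlinarith) (by nlinarith)]
  nlinarith [mul_le_mul_of_nonneg_left hst (mul_nonneg hρ hh.le)]

theorem boundFrac {a ρ h v s : ℝ} (ha : 0 < a) (hh : 0 < h) (hs : 0 ≤ s)
    (hineq : a * s * (ρ - v) - h * v ≥ 0) : v ≤ a * ρ * s / (a * s + h) := by
  rw [le_div_iff₀ (by nlinarith)]
  nlinarith

theorem boundFrac2 {ρ h v s : ℝ} (hh : 0 < h) (hs : 0 ≤ s)
    (hineq : s * (ρ - v) - h * v ≥ 0) : v ≤ ρ * s / (s + h) := by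
  rw [le_div_iff₀ (by nlinarith)]
  nlinarith

theorem fracNonneg {a b : ℝ} (ha : 0 ≤ a) (hb : 0 < b) : 0 ≤ a / b :=
  div_nonneg ha hb.le

section PhiLemmas

variable {p : Params}

theorem phi3_nonneg (hp : p.Pos) {T : ℝ} (hT : 0 ≤ T) : 0 ≤ phi3 p T := by
  obtain ⟨hk, hkb6, hkb8, hh, hρ, hD⟩ := hp
  exact fracNonneg (mul_nonneg (mul_nonneg (hk 2).le (hρ 2 (by decide)).le) hT)
    (by nlinarith [mul_nonneg (hk 2).le hT, hh 2])

theorem phi4_nonneg (hp : p.Pos) {T : ℝ} (hT : 0 ≤ T) : 0 ≤ phi4 p T := by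
  obtain ⟨hk, hkb6, hkb8, hh, hρ, hD⟩ := hp
  exact fracNonneg (mul_nonneg (mul_nonneg (hk 3).le (hρ 3 (by decide)).le) hT)
    (by nlinarith [mul_nonneg (hk 3).le hT, hh 3])

theorem phi7_nonneg (hp : p.Pos) {T : ℝ} (hT : 0 ≤ T) : 0 ≤ phi7 p T := by
  obtain ⟨hk, hkb6, hkb8, hh, hρ, hD⟩ := hp
  exact fracNonneg (mul_nonneg (mul_nonneg (hk 6).le (hρ 6 (by decide)).le) hT)
    (by nlinarith [mul_nonneg (hk 6).le hT, hh 6])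

theorem phi5_nonneg (hp : p.Pos) {T : ℝ} (hT : 0 ≤ T) : 0 ≤ phi5 p T := by
  have h7 := phi7_nonneg hp hT
  obtain ⟨hk, hkb6, hkb8, hh, hρ, hD⟩ := hp
  exact fracNonneg (mul_nonneg (mul_nonneg (hk 4).le (hρ 4 (by decide)).le) h7)
    (by nlinarith [mul_nonneg (hk 4).le h7, hh 4])

theorem phi2_nonneg (hp : p.Pos) {T : ℝ} (hT : 0 ≤ T) : 0 ≤ phi2 p T := by
  have h4 := phi4_nonneg hp hT
  have h5 := phi5_nonneg hp hT
  obtain ⟨hk, hkb6, hkb8, hh, hρ, hD⟩ := hp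
  exact mul_nonneg (div_nonneg (hk 1).le (hh 1).le) (mul_nonneg h4 h5)

theorem phi6_nonneg (hp : p.Pos) {T : ℝ} (hT : 0 ≤ T) : 0 ≤ phi6 p T := by
  have h5 := phi5_nonneg hp hT
  have h2 := phi2_nonneg hp hT
  obtain ⟨hk, hkb6, hkb8, hh, hρ, hD⟩ := hp
  exact fracNonneg (mul_nonneg (hρ 5 (by decide)).le
      (add_nonneg (mul_nonneg (hk 5).le h5) (mul_nonneg hkb6.le h2)))
    (by nlinarith [mul_nonneg (hk 5).le h5, mul_nonneg hkb6.le h2, hh 5])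

theorem phi1_nonneg (hp : p.Pos) {T : ℝ} (hT : 0 ≤ T) : 0 ≤ phi1 p T := by
  have h3 := phi3_nonneg hp hT
  have h6 := phi6_nonneg hp hT
  obtain ⟨hk, hkb6, hkb8, hh, hρ, hD⟩ := hp
  exact mul_nonneg (div_nonneg (hk 0).le (hh 0).le) (mul_nonneg h3 h6)

theorem phi3_mono (hp : p.Pos) {s t : ℝ} (hs : 0 ≤ s) (hst : s ≤ t) : phi3 p s ≤ phi3 p t :=
  monoFrac (hp.1 2) (hp.2.2.2.2.1 2 (by decide)).le (hp.2.2.2.1 2) hs hst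

theorem phi4_mono (hp : p.Pos) {s t : ℝ} (hs : 0 ≤ s) (hst : s ≤ t) : phi4 p s ≤ phi4 p t :=
  monoFrac (hp.1 3) (hp.2.2.2.2.1 3 (by decide)).le (hp.2.2.2.1 3) hs hst

theorem phi7_mono (hp : p.Pos) {s t : ℝ} (hs : 0 ≤ s) (hst : s ≤ t) : phi7 p s ≤ phi7 p t :=
  monoFrac (hp.1 6) (hp.2.2.2.2.1 6 (by decide)).le (hp.2.2.2.1 6) hs hst

theorem phi5_mono (hp : p.Pos) {s t : ℝ} (hs : 0 ≤ s) (hst : s ≤ t) : phi5 p s ≤ phi5 p t :=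
  monoFrac (hp.1 4) (hp.2.2.2.2.1 4 (by decide)).le (hp.2.2.2.1 4)
    (phi7_nonneg hp hs) (phi7_mono hp hs hst)

theorem phi2_mono (hp : p.Pos) {s t : ℝ} (hs : 0 ≤ s) (hst : s ≤ t) : phi2 p s ≤ phi2 p t := by
  have ht : 0 ≤ t := hs.trans hst
  refine mul_le_mul_of_nonneg_left ?_ (div_nonneg (hp.1 1).le (hp.2.2.2.1 1).le)
  exact mul_le_mul (phi4_mono hp hs hst) (phi5_mono hp hs hst)
    (phi5_nonneg hp hs) (phi4_nonneg hp ht)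

theorem phi6_mono (hp : p.Pos) {s t : ℝ} (hs : 0 ≤ s) (hst : s ≤ t) : phi6 p s ≤ phi6 p t := by
  refine monoFrac2 (hp.2.2.2.2.1 5 (by decide)).le (hp.2.2.2.1 5) ?_ ?_
  · exact add_nonneg (mul_nonneg (hp.1 5).le (phi5_nonneg hp hs))
      (mul_nonneg hp.2.1.le (phi2_nonneg hp hs))
  · exact add_le_add (mul_le_mul_of_nonneg_left (phi5_mono hp hs hst) (hp.1 5).le)
      (mul_le_mul_of_nonneg_left (phi2_mono hp hs hst) hp.2.1.le)

theorem phi1_mono (hp : p.Pos) {s t : ℝ} (hs : 0 ≤ s) (hst : s ≤ t) : phi1 p s ≤ phi1 p t := by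
  have ht : 0 ≤ t := hs.trans hst
  refine mul_le_mul_of_nonneg_left ?_ (div_nonneg (hp.1 0).le (hp.2.2.2.1 0).le)
  exact mul_le_mul (phi3_mono hp hs hst) (phi6_mono hp hs hst)
    (phi6_nonneg hp hs) (phi3_nonneg hp ht)

end PhiLemmas
section ContLemmas

variable {p : Params}

theorem contPhi3 (hp : p.Pos) : ContinuousOn (phi3 p) (Set.Ici 0) := by
  apply ContinuousOn.div (by fun_prop) (by fun_prop)
  intro x hx
  have hx0 : (0:ℝ) ≤ x := hx
  nlinarith [mul_nonneg (hp.1 2).le hx0, hp.2.2.2.1 2]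

theorem contPhi4 (hp : p.Pos) : ContinuousOn (phi4 p) (Set.Ici 0) := by
  apply ContinuousOn.div (by fun_prop) (by fun_prop)
  intro x hx
  have hx0 : (0:ℝ) ≤ x := hx
  nlinarith [mul_nonneg (hp.1 3).le hx0, hp.2.2.2.1 3]

theorem contPhi7 (hp : p.Pos) : ContinuousOn (phi7 p) (Set.Ici 0) := by
  apply ContinuousOn.div (by fun_prop) (by fun_prop)
  intro x hx
  have hx0 : (0:ℝ) ≤ x := hx
  nlinarith [mul_nonneg (hp.1 6).le hx0, hp.2.2.2.1 6]

theorem contPhi5 (hp : p.Pos) : ContinuousOn (phi5 p) (Set.Ici 0) := by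
  apply ContinuousOn.div (continuousOn_const.mul (contPhi7 hp))
    ((continuousOn_const.mul (contPhi7 hp)).add continuousOn_const)
  intro x hx
  have h7 := phi7_nonneg hp (show (0:ℝ) ≤ x from hx)
  simp only [Pi.add_apply, Pi.mul_apply]
  nlinarith [mul_nonneg (hp.1 4).le h7, hp.2.2.2.1 4]

theorem contPhi2 (hp : p.Pos) : ContinuousOn (phi2 p) (Set.Ici 0) :=
  continuousOn_const.mul ((contPhi4 hp).mul (contPhi5 hp))

theorem contPhi6 (hp : p.Pos) : ContinuousOn (phi6 p) (Set.Ici 0) := by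
  apply ContinuousOn.div
    (continuousOn_const.mul ((continuousOn_const.mul (contPhi5 hp)).add
      (continuousOn_const.mul (contPhi2 hp))))
    (((continuousOn_const.mul (contPhi5 hp)).add
      (continuousOn_const.mul (contPhi2 hp))).add continuousOn_const)
  intro x hx
  have h5 := phi5_nonneg hp (show (0:ℝ) ≤ x from hx)
  have h2 := phi2_nonneg hp (show (0:ℝ) ≤ x from hx)
  simp only [Pi.add_apply, Pi.mul_apply]
  nlinarith [mul_nonneg (hp.1 5).le h5, mul_nonneg hp.2.1.le h2, hp.2.2.2.1 5]

theorem contPhi1 (hp : p.Pos) : ContinuousOn (phi1 p) (Set.Ici 0) :=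
  continuousOn_const.mul ((contPhi3 hp).mul (contPhi6 hp))

theorem contPpoly (hp : p.Pos) : ContinuousOn (Ppoly p) (Set.Ici 0) := by
  apply ContinuousOn.sub
  · exact ((continuousOn_const.mul (contPhi6 hp)).add
      (continuousOn_const.mul (contPhi1 hp))).mul
      (continuousOn_const.sub continuousOn_id)
  · exact continuousOn_const.mul continuousOn_id

end ContLemmas

theorem Ppoly_neg {p : Params} {Tb Tm : ℝ} (hp : p.Pos) (hP : CondP p Tb Tm) :
    ∀ t : ℝ, Tm < t → Ppoly p t < 0 := by
  intro t ht
  obtain ⟨hTb, hTbm, hzero, hd0, hdTb, hdTm⟩ := hP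
  have hTm0 : 0 < Tm := hTb.trans hTbm
  by_contra hc
  push_neg at hc
  have hPt : 0 < Ppoly p t := by
    rcases hc.eq_or_lt with h | h
    · exfalso
      rcases (hzero t (by linarith)).1 h.symm with h' | h' | h' <;> linarith
    · exact h
  have hPTm : Ppoly p Tm = 0 := (hzero Tm hTm0.le).2 (Or.inr (Or.inr rfl))
  have hdiff : DifferentiableAt ℝ (Ppoly p) Tm := by
    by_contra hnd
    rw [deriv_zero_of_not_differentiableAt hnd] at hdTm
    linarith
  have hslope := hdiff.hasDerivAt
  rw [hasDerivAt_iff_tendsto_slope] at hslope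
  have hev : ∀ᶠ y in 𝓝[≠] Tm, slope (Ppoly p) Tm y < 0 :=
    hslope.eventually (Iio_mem_nhds hdTm)
  have hev2 : ∀ᶠ y in 𝓝[>] Tm, slope (Ppoly p) Tm y < 0 :=
    hev.filter_mono (nhdsWithin_mono Tm fun y hy => ne_of_gt hy)
  have hev3 : ∀ᶠ y in 𝓝[>] Tm, y < t := by
    filter_upwards [mem_nhdsWithin_of_mem_nhds (Iio_mem_nhds ht)] with y hy
    exact hy
  obtain ⟨s, hs1, hs2, hs3⟩ := (hev2.and (hev3.and eventually_mem_nhdsWithin)).exists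
  have hsTm : Tm < s := hs3
  have hPs : Ppoly p s < 0 := by
    have h' : (s - Tm)⁻¹ * (Ppoly p s) < 0 := by
      have := hs1
      simp [slope, hPTm] at this
      convert this using 2
    by_contra hps
    push_neg at hps
    nlinarith [inv_pos.2 (sub_pos.2 hsTm)]
  have hcont : ContinuousOn (Ppoly p) (Set.Icc s t) :=
    (contPpoly hp).mono fun y hy => le_trans (by linarith) hy.1
  have hmem : (0:ℝ) ∈ Set.Icc (Ppoly p s) (Ppoly p t) := ⟨hPs.le, hPt.le⟩
  obtain ⟨z, hz, hz0⟩ := intermediate_value_Icc hs2.le hcont hmem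
  rcases (hzero z (by linarith [hz.1])).1 hz0 with h' | h' | h' <;>
    [skip; skip; skip] <;> linarith [hz.1]

theorem key_bounds {p : Params} (hp : p.Pos) (v : Fin 8 → ℝ) (hv : ∀ i, 0 ≤ v i)
    (hF : ∀ i : Fin 8, i ≠ 7 → 0 ≤ Fvec p v i) :
    v 0 ≤ phi1 p (v 7) ∧ v 1 ≤ phi2 p (v 7) ∧ v 2 ≤ phi3 p (v 7) ∧
      v 3 ≤ phi4 p (v 7) ∧ v 4 ≤ phi5 p (v 7) ∧ v 5 ≤ phi6 p (v 7) ∧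
      v 6 ≤ phi7 p (v 7) := by
  obtain ⟨hk, hkb6, hkb8, hh, hρ, hD⟩ := hp
  have hp' : p.Pos := ⟨hk, hkb6, hkb8, hh, hρ, hD⟩
  have h7 : (0:ℝ) ≤ v 7 := hv 7
  have H0 : 0 ≤ p.k 0 * v 2 * v 5 - p.h 0 * v 0 := by simpa [Fvec] using hF 0 (by decide)
  have H1 : 0 ≤ p.k 1 * v 3 * v 4 - p.h 1 * v 1 := by simpa [Fvec] using hF 1 (by decide)
  have H2 : 0 ≤ p.k 2 * v 7 * (p.ρ 2 - v 2) - p.h 2 * v 2 := by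
    simpa [Fvec] using hF 2 (by decide)
  have H3 : 0 ≤ p.k 3 * v 7 * (p.ρ 3 - v 3) - p.h 3 * v 3 := by
    simpa [Fvec] using hF 3 (by decide)
  have H4 : 0 ≤ p.k 4 * v 6 * (p.ρ 4 - v 4) - p.h 4 * v 4 := by
    simpa [Fvec] using hF 4 (by decide)
  have H5 : 0 ≤ (p.k 5 * v 4 + p.kb6 * v 1) * (p.ρ 5 - v 5) - p.h 5 * v 5 := by
    have h := hF 5 (by decide)
    rwa [show Fvec p v 5 = (p.k 5 * v 4 + p.kb6 * v 1) * (p.ρ 5 - v 5) - p.h 5 * v 5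
      from rfl] at h
  have H6 : 0 ≤ p.k 6 * v 7 * (p.ρ 6 - v 6) - p.h 6 * v 6 := by
    have h := hF 6 (by decide)
    rwa [show Fvec p v 6 = p.k 6 * v 7 * (p.ρ 6 - v 6) - p.h 6 * v 6 from rfl] at h
  have B2 : v 2 ≤ phi3 p (v 7) := boundFrac (hk 2) (hh 2) h7 H2
  have B3 : v 3 ≤ phi4 p (v 7) := boundFrac (hk 3) (hh 3) h7 H3
  have B6 : v 6 ≤ phi7 p (v 7) := boundFrac (hk 6) (hh 6) h7 H6
  have B4 : v 4 ≤ phi5 p (v 7) := by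
    refine le_trans (boundFrac (hk 4) (hh 4) (hv 6) H4) ?_
    exact monoFrac (hk 4) (hρ 4 (by decide)).le (hh 4) (hv 6) B6
  have B1 : v 1 ≤ phi2 p (v 7) := by
    have h1 : v 1 ≤ p.k 1 / p.h 1 * (v 3 * v 4) := by
      rw [div_mul_eq_mul_div, le_div_iff₀ (hh 1)]
      nlinarith
    refine le_trans h1 ?_
    refine mul_le_mul_of_nonneg_left ?_ (div_nonneg (hk 1).le (hh 1).le)
    exact mul_le_mul B3 B4 (hv 4) (phi4_nonneg hp' h7)
  have B5 : v 5 ≤ phi6 p (v 7) := by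
    have hs : (0:ℝ) ≤ p.k 5 * v 4 + p.kb6 * v 1 :=
      add_nonneg (mul_nonneg (hk 5).le (hv 4)) (mul_nonneg hkb6.le (hv 1))
    refine le_trans (boundFrac2 (hh 5) hs H5) ?_
    refine monoFrac2 (hρ 5 (by decide)).le (hh 5) hs ?_
    exact add_le_add (mul_le_mul_of_nonneg_left B4 (hk 5).le)
      (mul_le_mul_of_nonneg_left B1 hkb6.le)
  have B0 : v 0 ≤ phi1 p (v 7) := by
    have h1 : v 0 ≤ p.k 0 / p.h 0 * (v 2 * v 5) := by
      rw [div_mul_eq_mul_div, le_div_iff₀ (hh 0)]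
      nlinarith
    refine le_trans h1 ?_
    refine mul_le_mul_of_nonneg_left ?_ (div_nonneg (hk 0).le (hh 0).le)
    exact mul_le_mul B2 B5 (hv 5) (phi3_nonneg hp' h7)
  exact ⟨B0, B1, B2, B3, B4, B5, B6⟩
/-- Every pulse for `F^τ` is bounded above by `w⁻` componentwise on `[0,∞)`. -/
theorem pulse_le_wminus (p : Params) (hp : p.Pos) (Tb Tm : ℝ) (hP : CondP p Tb Tm)
    (τ₁ : ℝ) (hτ₁ : τ₁ ∈ Set.Ioo (0 : ℝ) 1) (g : ℝ → ℝ) (hg : GoodG Tb Tm g) :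
    ∀ τ ∈ Set.Icc (0 : ℝ) 1, ∀ w : ℝ → Fin 8 → ℝ, IsPulse p (Ftau p τ₁ g τ) w →
      ∀ i : Fin 8, ∀ x : ℝ, 0 ≤ x → w x i ≤ phivec p Tm i := by
  intro τ hτ w hw i x hx
  obtain ⟨hgC, hgnn, hgsupp⟩ := hg
  obtain ⟨hC2, hEq, hD'0, hLim, hDneg⟩ := hw
  have hanti : ∀ j : Fin 8, AntitoneOn (fun y => w y j) (Set.Ici 0) :=
    fun j => myAnti _ (hC2 j) (hDneg j)
  have hnn : ∀ j : Fin 8, ∀ y : ℝ, 0 ≤ y → 0 ≤ w y j := by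
    intro j y hy
    refine le_of_tendsto (hLim j) ?_
    filter_upwards [eventually_ge_atTop y] with z hz
    exact hanti j hy (hy.trans hz) hz
  have hmax : ∀ j : Fin 8, ∀ y : ℝ, 0 ≤ y → w y j ≤ w 0 j :=
    fun j y hy => hanti j Set.self_mem_Ici hy hy
  have hFnn : ∀ j : Fin 8, 0 ≤ Ftau p τ₁ g τ (w 0) j := by
    intro j
    have hdd : deriv (deriv fun y => w y j) 0 ≤ 0 :=
      secondDeriv_nonpos _ (hC2 j) (hD'0 j) (hDneg j)
    have heq := hEq j 0 le_rfl
    nlinarith [mul_nonpos_of_nonneg_of_nonpos (hp.2.2.2.2.2 j).le hdd]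
  set v : Fin 8 → ℝ := w 0 with hvdef
  have hvnn : ∀ j, 0 ≤ v j := fun j => hnn j 0 le_rfl
  have hFvec : ∀ j : Fin 8, j ≠ 7 → 0 ≤ Fvec p v j := by
    intro j hj
    simpa [Ftau, hj] using hFnn j
  obtain ⟨B0, B1, B2, B3, B4, B5, B6⟩ := key_bounds hp v hvnn hFvec
  have ht0 : (0:ℝ) ≤ v 7 := hvnn 7
  have hTm0 : 0 < Tm := hP.1.trans hP.2.1
  have htTm : v 7 ≤ Tm := by
    by_contra hc
    push_neg at hc
    have htpos : 0 < v 7 := hTm0.trans hc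
    have hgt : g (v 7) = 0 := by
      apply image_eq_zero_of_notMem_tsupport
      intro hmem
      exact absurd (hgsupp hmem).2 (not_lt.mpr hc.le)
    obtain ⟨A, B, hA, hB, hAB, hF7⟩ :
        ∃ A B : ℝ, 0 ≤ A ∧ 0 ≤ B ∧ A + B = 1 ∧
          0 ≤ A * Fvec p v 7 + B * Ppoly p (v 7) := by
      rcases lt_or_ge τ τ₁ with h | h
      · exact ⟨1, 0, by norm_num, by norm_num, by norm_num,
          by simpa [Ftau, hgt, h] using hFnn 7⟩
      · refine ⟨(1 - τ) / (1 - τ₁), (τ - τ₁) / (1 - τ₁), ?_, ?_, ?_, ?_⟩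
        · exact div_nonneg (by linarith [hτ.2]) (by linarith [hτ₁.2])
        · exact div_nonneg (by linarith) (by linarith [hτ₁.2])
        · rw [← add_div, show (1 - τ) + (τ - τ₁) = 1 - τ₁ by ring,
            div_self (by linarith [hτ₁.2] : (1:ℝ) - τ₁ ≠ 0)]
        · simpa [Ftau, hgt, not_lt.mpr h] using hFnn 7
    have hFv7 : Fvec p v 7 =
        (p.k 7 * v 5 + p.kb8 * v 0) * (p.ρ 7 - v 7) - p.h 7 * v 7 := rfl
    have hPdef : Ppoly p (v 7) =
        (p.k 7 * phi6 p (v 7) + p.kb8 * phi1 p (v 7)) * (p.ρ 7 - v 7) - p.h 7 * v 7 := rfl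
    have hS : p.k 7 * v 5 + p.kb8 * v 0 ≤
        p.k 7 * phi6 p (v 7) + p.kb8 * phi1 p (v 7) :=
      add_le_add (mul_le_mul_of_nonneg_left B5 (hp.1 7).le)
        (mul_le_mul_of_nonneg_left B0 hp.2.2.1.le)
    have hSnn : 0 ≤ p.k 7 * v 5 + p.kb8 * v 0 :=
      add_nonneg (mul_nonneg (hp.1 7).le (hvnn 5)) (mul_nonneg hp.2.2.1.le (hvnn 0))
    have hSnn' : 0 ≤ p.k 7 * phi6 p (v 7) + p.kb8 * phi1 p (v 7) := hSnn.trans hS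
    have hPneg : Ppoly p (v 7) < 0 := Ppoly_neg hp hP (v 7) hc
    have hcomb : A * Ppoly p (v 7) + B * Ppoly p (v 7) = Ppoly p (v 7) := by
      rw [← add_mul, hAB, one_mul]
    rcases le_or_gt (v 7) (p.ρ 7) with hcase | hcase
    · have hFle : Fvec p v 7 ≤ Ppoly p (v 7) := by
        rw [hFv7, hPdef]
        have := mul_le_mul_of_nonneg_right hS (by linarith : (0:ℝ) ≤ p.ρ 7 - v 7)
        linarith
      have h1 := mul_le_mul_of_nonneg_left hFle hA
      have h2 : B * Ppoly p (v 7) ≤ B * Ppoly p (v 7) := le_rfl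
      linarith
    · have h7t : 0 < p.h 7 * v 7 := mul_pos (hp.2.2.2.1 7) htpos
      have hF8 : Fvec p v 7 ≤ -(p.h 7 * v 7) := by
        rw [hFv7]
        have := mul_nonpos_of_nonneg_of_nonpos hSnn (by linarith : p.ρ 7 - v 7 ≤ 0)
        linarith
      have hP8 : Ppoly p (v 7) ≤ -(p.h 7 * v 7) := by
        rw [hPdef]
        have := mul_nonpos_of_nonneg_of_nonpos hSnn' (by linarith : p.ρ 7 - v 7 ≤ 0)
        linarith
      have h1 := mul_le_mul_of_nonneg_left hF8 hA
      have h2 := mul_le_mul_of_nonneg_left hP8 hB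
      nlinarith
  have M1 : phi1 p (v 7) ≤ phi1 p Tm := phi1_mono hp ht0 htTm
  have M2 : phi2 p (v 7) ≤ phi2 p Tm := phi2_mono hp ht0 htTm
  have M3 : phi3 p (v 7) ≤ phi3 p Tm := phi3_mono hp ht0 htTm
  have M4 : phi4 p (v 7) ≤ phi4 p Tm := phi4_mono hp ht0 htTm
  have M5 : phi5 p (v 7) ≤ phi5 p Tm := phi5_mono hp ht0 htTm
  have M6 : phi6 p (v 7) ≤ phi6 p Tm := phi6_mono hp ht0 htTm
  have M7 : phi7 p (v 7) ≤ phi7 p Tm := phi7_mono hp ht0 htTm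
  have hwx : ∀ j : Fin 8, w x j ≤ v j := fun j => hmax j x hx
  fin_cases i <;> simp only [phivec, Matrix.cons_val_zero, Matrix.cons_val_one,
    Matrix.head_cons, Matrix.cons_val_succ] <;>
    [ exact le_trans (hwx 0) (le_trans B0 M1);
      exact le_trans (hwx 1) (le_trans B1 M2);
      exact le_trans (hwx 2) (le_trans B2 M3);
      exact le_trans (hwx 3) (le_trans B3 M4);
      exact le_trans (hwx 4) (le_trans B4 M5);
      exact le_trans (hwx 5) (le_trans B5 M6);
      exact le_trans (hwx 6) (le_trans B6 M7);
      exact le_trans (hwx 7) htTm]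

end
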